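/- arXiv:math/9506208 — 2 statements merged into one kernel-verified Lean document; each statement's English description precedes it below -/
import Mathlib

section
/- A Boolean algebra B of uniform density is semi-Cohen if and only if the second player has a winning strategy in the infinite game G on B, in which two players alternately choose elements a₀, b₀, a₁, b₁, … of B and the second player wins if the subalgebra generated by {a₀, b₀, a₁, b₁, …} is a regular subalgebra of B. -/
def Subalg {B : Type*} [BooleanAlgebra B] (A : Set B) : Prop :=
  ⊥ ∈ A ∧ ⊤ ∈ A ∧ (∀ x ∈ A, ∀ y ∈ A, x ⊔ y ∈ A) ∧ (∀ x ∈ A, xᶜ ∈ A)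

def MaxACIn {B : Type*} [BooleanAlgebra B] (W A : Set B) : Prop :=
  W ⊆ A ∧ ⊥ ∉ W ∧ W.Pairwise (fun x y => x ⊓ y = ⊥) ∧
    ∀ a ∈ A, a ≠ ⊥ → ∃ w ∈ W, a ⊓ w ≠ ⊥

/-- `X` is a regular subalgebra of `A`: every maximal antichain of `X` is maximal in `A`. -/
def RegIn {B : Type*} [BooleanAlgebra B] (X A : Set B) : Prop :=
  ∀ W : Set B, MaxACIn W X → MaxACIn W A

/-- `C` is a closed unbounded family of countable subsets of `A`. -/
def ClubIn {B : Type*} (A : Set B) (C : Set (Set B)) : Prop :=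
  (∀ x ∈ C, x ⊆ A ∧ x.Countable) ∧
  (∀ f : ℕ → Set B, (∀ n, f n ∈ C) → Monotone f → (⋃ n, f n) ∈ C) ∧
  (∀ x : Set B, x ⊆ A → x.Countable → ∃ y ∈ C, x ⊆ y)

/-- Density below `a` of the subalgebra carried by `A`. -/
noncomputable def densIn {B : Type*} [BooleanAlgebra B] (A : Set B) (a : B) : Cardinal :=
  sInf {c : Cardinal | ∃ D : Set B, D ⊆ A ∧ (∀ d ∈ D, d ≤ a ∧ d ≠ ⊥) ∧
    (∀ b ∈ A, b ≤ a → b ≠ ⊥ → ∃ d ∈ D, d ≤ b) ∧ c = Cardinal.mk ↥D}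

/-- The subalgebra carried by `A` has uniform density. -/
def UnifDensIn {B : Type*} [BooleanAlgebra B] (A : Set B) : Prop :=
  ∀ a ∈ A, a ≠ ⊥ → densIn A a = densIn A ⊤

/-- The subalgebra carried by `A` is semi-Cohen: it has uniform density and a closed
unbounded family of countable regular subalgebras. -/
def SemiCohen {B : Type*} [BooleanAlgebra B] (A : Set B) : Prop :=
  UnifDensIn A ∧ ∃ C : Set (Set B), ClubIn A C ∧ ∀ X ∈ C, Subalg X ∧ RegIn X A

/-- The subalgebra of the ambient algebra generated by `X`. -/
def genAlg {B : Type*} [BooleanAlgebra B] (X : Set B) : Set B :=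
  ⋂₀ {A : Set B | Subalg A ∧ X ⊆ A}

/-- The moves of player II produced by the strategy `σ` against the play `a` of
player I: II's `n`-th move is `σ` applied to the position `a₀, b₀, …, b_{n-1}, a_n`. -/
noncomputable def playII {B : Type*} [BooleanAlgebra B] (σ : List B → B)
    (a : ℕ → B) (n : ℕ) : B :=
  Nat.strongRecOn (motive := fun _ => B) n (fun n ih =>
    σ ((List.ofFn (fun i : Fin n => [a i.1, ih i.1 i.2])).flatten ++ [a n]))

/-!
If `σ` is a winning strategy for II, the countable subalgebras closed under `σ` form a club, and
each of them is regular: let I enumerate it; II's answers stay inside it, so the play generates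
exactly that subalgebra. Conversely, from a club `C` of countable regular subalgebras II builds,
along the play, an increasing chain `X₀ ⊆ X₁ ⊆ ⋯` in `C` with `aᵢ ∈ Xᵢ`, and spends the move
indexed by the pair `(i, j)` on the `j`-th element of `Xᵢ`. The play then generates `⋃ Xᵢ`,
which lies in `C` and is therefore regular.
-/

open Set

theorem List.exists_forall_mem_of_monotone {α : Type*} {f : ℕ → Set α} (hf : Monotone f)
    {l : List α} (hl : ∀ x ∈ l, x ∈ ⋃ n, f n) : ∃ n, ∀ x ∈ l, x ∈ f n := by
  classical
  obtain ⟨n, hn⟩ := hf.directed_le.exists_mem_subset_of_finset_subset_biUnion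
    (s := l.toFinset) fun x hx => hl x (List.mem_toFinset.mp hx)
  exact ⟨n, fun x hx => hn (List.mem_toFinset.mpr hx)⟩

section Subalgebras

variable {B : Type*} [BooleanAlgebra B]

theorem Subalg.genAlg_eq {X : Set B} (hX : Subalg X) : genAlg X = X :=
  subset_antisymm (fun _ hx => hx X ⟨hX, subset_rfl⟩) fun _ hx _ hA => hA.2 hx

theorem subalg_iUnion_of_monotone {f : ℕ → Set B} (hf : ∀ n, Subalg (f n))
    (hmono : Monotone f) : Subalg (⋃ n, f n) := by
  refine ⟨mem_iUnion.mpr ⟨0, (hf 0).1⟩, mem_iUnion.mpr ⟨0, (hf 0).2.1⟩, ?_, ?_⟩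
  · intro x hx y hy
    obtain ⟨m, hm⟩ := mem_iUnion.mp hx
    obtain ⟨k, hk⟩ := mem_iUnion.mp hy
    exact mem_iUnion.mpr ⟨max m k, (hf _).2.2.1 x (hmono (le_max_left m k) hm)
      y (hmono (le_max_right m k) hk)⟩
  · intro x hx
    obtain ⟨m, hm⟩ := mem_iUnion.mp hx
    exact mem_iUnion.mpr ⟨m, (hf m).2.2.2 x hm⟩

end Subalgebras

section Positions

variable {α : Type*}

def positionII (a b : ℕ → α) (n : ℕ) : List α :=
  (List.ofFn fun i : Fin n => [a i, b i]).flatten ++ [a n]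

theorem positionII_succ (a b : ℕ → α) (n : ℕ) :
    positionII a b (n + 1) = positionII a b n ++ [b n, a (n + 1)] := by
  rw [positionII, positionII, List.ofFn_succ', List.concat_eq_append, List.flatten_append]
  simp

theorem length_positionII (a b : ℕ → α) (n : ℕ) : (positionII a b n).length = 2 * n + 1 := by
  induction n with
  | zero => rfl
  | succ n ih => rw [positionII_succ, List.length_append, ih]; rfl

theorem getD_positionII (a b : ℕ → α) (d : α) {n k : ℕ} (hk : k ≤ n) :
    (positionII a b n).getD (2 * k) d = a k := by
  induction n with
  | zero => rw [Nat.le_zero.mp hk]; rfl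
  | succ n ih =>
    rw [positionII_succ]
    rcases Nat.lt_or_ge k (n + 1) with h | h
    · rw [List.getD_append _ _ _ _ (by rw [length_positionII]; omega), ih (by omega)]
    · obtain rfl : k = n + 1 := by omega
      rw [List.getD_append_right _ _ _ _ (by rw [length_positionII]; omega), length_positionII,
        show 2 * (n + 1) - (2 * n + 1) = 1 by omega]
      rfl

theorem forall_mem_positionII {a b : ℕ → α} {X : Set α} {n : ℕ} (ha : ∀ i ≤ n, a i ∈ X)
    (hb : ∀ i < n, b i ∈ X) : ∀ x ∈ positionII a b n, x ∈ X := by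
  simp only [positionII, List.mem_append, List.mem_flatten, List.mem_ofFn, List.mem_singleton]
  rintro x (⟨_, ⟨i, rfl⟩, hx⟩ | rfl)
  · simp only [List.mem_cons, List.not_mem_nil, or_false] at hx
    rcases hx with rfl | rfl
    exacts [ha i i.2.le, hb i i.2]
  · exact ha n le_rfl

theorem playII_eq {B : Type*} [BooleanAlgebra B] (σ : List B → B) (a : ℕ → B) (n : ℕ) :
    playII σ a n = σ (positionII a (playII σ a) n) := by
  rw [playII, Nat.strongRecOn_eq]
  rfl

end Positions

section FromStrategy

def ClosedUnder {α : Type*} (σ : List α → α) (X : Set α) : Prop :=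
  ∀ l : List α, (∀ x ∈ l, x ∈ X) → σ l ∈ X

theorem ClosedUnder.iUnion_of_monotone {α : Type*} {σ : List α → α} {f : ℕ → Set α}
    (hf : ∀ n, ClosedUnder σ (f n)) (hmono : Monotone f) : ClosedUnder σ (⋃ n, f n) := by
  intro l hl
  obtain ⟨n, hn⟩ := List.exists_forall_mem_of_monotone hmono hl
  exact mem_iUnion.mpr ⟨n, hf n l hn⟩

variable {B : Type*} [BooleanAlgebra B]

def closedSubalgs (σ : List B → B) : Set (Set B) :=
  {X | Subalg X ∧ X.Countable ∧ ClosedUnder σ X}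

def closureStep (σ : List B → B) (Y : Set B) : Set B :=
  insert ⊥ (insert ⊤ (Y ∪ image2 (· ⊔ ·) Y Y ∪ compl '' Y ∪
    range fun l : List Y => σ (l.map (↑))))

theorem countable_closureStep (σ : List B → B) {Y : Set B} (hY : Y.Countable) :
    (closureStep σ Y).Countable := by
  have := hY.to_subtype
  exact ((((hY.union (hY.image2 hY _)).union (hY.image _)).union (countable_range _)).insert
    _).insert _

theorem subset_closureStep (σ : List B → B) (Y : Set B) : Y ⊆ closureStep σ Y :=
  fun _ hx => mem_insert_of_mem _ <| mem_insert_of_mem _ <| .inl <| .inl <| .inl hx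

theorem sup_mem_closureStep (σ : List B → B) {Y : Set B} {x y : B} (hx : x ∈ Y) (hy : y ∈ Y) :
    x ⊔ y ∈ closureStep σ Y :=
  mem_insert_of_mem _ <| mem_insert_of_mem _ <| .inl <| .inl <| .inr <| mem_image2_of_mem hx hy

theorem compl_mem_closureStep (σ : List B → B) {Y : Set B} {x : B} (hx : x ∈ Y) :
    xᶜ ∈ closureStep σ Y :=
  mem_insert_of_mem _ <| mem_insert_of_mem _ <| .inl <| .inr <| mem_image_of_mem _ hx

theorem apply_mem_closureStep (σ : List B → B) {Y : Set B} (l : List Y) :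
    σ (l.map (↑)) ∈ closureStep σ Y :=
  mem_insert_of_mem _ <| mem_insert_of_mem _ <| .inr <| mem_range_self l

def strategyClosure (σ : List B → B) (s : Set B) : Set B :=
  ⋃ n, (closureStep σ)^[n] s

theorem subset_strategyClosure (σ : List B → B) (s : Set B) : s ⊆ strategyClosure σ s :=
  subset_iUnion (fun n => (closureStep σ)^[n] s) 0

theorem strategyClosure_mem_closedSubalgs (σ : List B → B) {s : Set B} (hs : s.Countable) :
    strategyClosure σ s ∈ closedSubalgs σ := by
  set Y : ℕ → Set B := fun n => (closureStep σ)^[n] s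
  have hY : ∀ n, Y (n + 1) = closureStep σ (Y n) := fun n => Function.iterate_succ_apply' ..
  have hmono : Monotone Y :=
    monotone_nat_of_le_succ fun n => (hY n).symm ▸ subset_closureStep σ (Y n)
  have mem_succ : ∀ {x} n, x ∈ closureStep σ (Y n) → x ∈ ⋃ n, Y n :=
    fun n hx => mem_iUnion.mpr ⟨n + 1, (hY n).symm ▸ hx⟩
  refine ⟨⟨mem_succ 0 (mem_insert _ _), mem_succ 0 (mem_insert_of_mem _ (mem_insert _ _)), ?_, ?_⟩,
    countable_iUnion fun n => ?_, ?_⟩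
  · intro x hx y hy
    obtain ⟨m, hm⟩ := mem_iUnion.mp hx
    obtain ⟨k, hk⟩ := mem_iUnion.mp hy
    exact mem_succ (max m k) <|
      sup_mem_closureStep σ (hmono (le_max_left m k) hm) (hmono (le_max_right m k) hk)
  · intro x hx
    obtain ⟨m, hm⟩ := mem_iUnion.mp hx
    exact mem_succ m (compl_mem_closureStep σ hm)
  · induction n with
    | zero => exact hs
    | succ n ih => rw [Function.iterate_succ_apply']; exact countable_closureStep σ ih
  · intro l hl
    obtain ⟨n, hn⟩ := List.exists_forall_mem_of_monotone hmono hl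
    lift l to List (Y n) using hn
    exact mem_succ n (apply_mem_closureStep σ l)

theorem clubIn_closedSubalgs (σ : List B → B) : ClubIn univ (closedSubalgs σ) := by
  refine ⟨fun X hX => ⟨subset_univ X, hX.2.1⟩, fun f hf hmono => ?_,
    fun s _ hs => ⟨_, strategyClosure_mem_closedSubalgs σ hs, subset_strategyClosure σ s⟩⟩
  exact ⟨subalg_iUnion_of_monotone (fun n => (hf n).1) hmono,
    countable_iUnion fun n => (hf n).2.1,
    ClosedUnder.iUnion_of_monotone (fun n => (hf n).2.2) hmono⟩

theorem ClosedUnder.playII_mem {σ : List B → B} {X : Set B} (hσ : ClosedUnder σ X)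
    {a : ℕ → B} (ha : ∀ n, a n ∈ X) (n : ℕ) : playII σ a n ∈ X := by
  induction n using Nat.strong_induction_on with
  | _ n ih => rw [playII_eq]; exact hσ _ (forall_mem_positionII (fun i _ => ha i) ih)

theorem genAlg_play_eq_of_mem_closedSubalgs {σ : List B → B} {X : Set B}
    (hX : X ∈ closedSubalgs σ) {a : ℕ → B} (ha : range a = X) :
    genAlg (range a ∪ range (playII σ a)) = X := by
  have haX : ∀ n, a n ∈ X := fun n => ha ▸ mem_range_self n
  rw [ha, union_eq_left.mpr (range_subset_iff.mpr (hX.2.2.playII_mem haX)), hX.1.genAlg_eq]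

theorem semiCohen_of_winning {σ : List B → B} (hud : UnifDensIn (univ : Set B))
    (hσ : ∀ a : ℕ → B, RegIn (genAlg (range a ∪ range (playII σ a))) univ) :
    SemiCohen (univ : Set B) := by
  refine ⟨hud, closedSubalgs σ, clubIn_closedSubalgs σ, fun X hX => ⟨hX.1, ?_⟩⟩
  obtain ⟨a, ha⟩ := hX.2.1.exists_eq_range ⟨⊥, hX.1.1⟩
  exact genAlg_play_eq_of_mem_closedSubalgs hX ha.symm ▸ hσ a

end FromStrategy

section FromClub

variable {α : Type*} {C : Set (Set α)}

theorem ClubIn.countable_of_mem {A : Set α} (hC : ClubIn A C) {X : Set α} (hX : X ∈ C) :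
    X.Countable :=
  (hC.1 X hX).2

noncomputable def clubHull (C : Set (Set α)) (s : Set α) : Set α :=
  Classical.epsilon fun X => X ∈ C ∧ s ⊆ X

theorem ClubIn.clubHull_spec (hC : ClubIn univ C) {s : Set α} (hs : s.Countable) :
    clubHull C s ∈ C ∧ s ⊆ clubHull C s :=
  Classical.epsilon_spec (hC.2.2 s (subset_univ s) hs)

noncomputable def hullChain (C : Set (Set α)) (a : ℕ → α) : ℕ → Set α
  | 0 => clubHull C {a 0}
  | i + 1 => clubHull C (insert (a (i + 1)) (hullChain C a i))

theorem hullChain_congr {a a' : ℕ → α} {i : ℕ} (h : ∀ k ≤ i, a k = a' k) :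
    hullChain C a i = hullChain C a' i := by
  induction i with
  | zero => rw [hullChain, hullChain, h 0 le_rfl]
  | succ i ih =>
    rw [hullChain, hullChain, h (i + 1) le_rfl, ih fun k hk => h k (hk.trans i.le_succ)]

theorem ClubIn.hullChain_mem (hC : ClubIn univ C) (a : ℕ → α) : ∀ i, hullChain C a i ∈ C
  | 0 => (hC.clubHull_spec (countable_singleton _)).1
  | i + 1 => (hC.clubHull_spec ((hC.countable_of_mem (hC.hullChain_mem a i)).insert _)).1

theorem ClubIn.insert_subset_hullChain_succ (hC : ClubIn univ C) (a : ℕ → α) (i : ℕ) :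
    insert (a (i + 1)) (hullChain C a i) ⊆ hullChain C a (i + 1) :=
  (hC.clubHull_spec ((hC.countable_of_mem (hC.hullChain_mem a i)).insert _)).2

theorem ClubIn.mem_hullChain (hC : ClubIn univ C) (a : ℕ → α) : ∀ i, a i ∈ hullChain C a i
  | 0 => (hC.clubHull_spec (countable_singleton _)).2 rfl
  | i + 1 => hC.insert_subset_hullChain_succ a i (mem_insert _ _)

theorem ClubIn.monotone_hullChain (hC : ClubIn univ C) (a : ℕ → α) :
    Monotone (hullChain C a) :=
  monotone_nat_of_le_succ fun i =>
    (subset_insert _ _).trans (hC.insert_subset_hullChain_succ a i)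

noncomputable def countableEnum [Nonempty α] (s : Set α) : ℕ → α :=
  Classical.epsilon fun e => range e = s

theorem range_countableEnum [Nonempty α] {s : Set α} (hs : s.Countable) (hne : s.Nonempty) :
    range (countableEnum s) = s :=
  Classical.epsilon_spec ((hs.exists_eq_range hne).imp fun _ h => h.symm)

end FromClub

section ClubStrategy

variable {B : Type*} [BooleanAlgebra B] {C : Set (Set B)}

/-- In a position of length `2n + 1`, with `n` unpairing to `(i, j)`, II plays the `j`-th
element of the `i`-th member of the chain built from I's moves, which sit at the even places. -/
noncomputable def clubStrategy (C : Set (Set B)) (p : List B) : B :=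
  countableEnum (hullChain C (fun k => p.getD (2 * k) ⊥) (p.length / 2).unpair.1)
    (p.length / 2).unpair.2

theorem playII_clubStrategy (a : ℕ → B) (n : ℕ) :
    playII (clubStrategy C) a n = countableEnum (hullChain C a n.unpair.1) n.unpair.2 := by
  rw [playII_eq, clubStrategy, length_positionII, show (2 * n + 1) / 2 = n by omega,
    hullChain_congr fun k hk => getD_positionII _ _ _ (hk.trans (Nat.unpair_left_le n))]

theorem ClubIn.range_playII_clubStrategy (hC : ClubIn univ C) (a : ℕ → B) :
    range (playII (clubStrategy C) a) = ⋃ i, hullChain C a i := by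
  have hrange : ∀ i, range (countableEnum (hullChain C a i)) = hullChain C a i := fun i =>
    range_countableEnum (hC.countable_of_mem (hC.hullChain_mem a i)) ⟨a i, hC.mem_hullChain a i⟩
  ext x
  simp only [mem_range, mem_iUnion, playII_clubStrategy]
  constructor
  · rintro ⟨n, rfl⟩
    exact ⟨n.unpair.1, (hrange _).subset (mem_range_self _)⟩
  · rintro ⟨i, hx⟩
    obtain ⟨j, rfl⟩ := (hrange i).superset hx
    exact ⟨Nat.pair i j, by rw [Nat.unpair_pair]⟩

theorem ClubIn.clubStrategy_wins (hC : ClubIn univ C)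
    (hreg : ∀ X ∈ C, Subalg X ∧ RegIn X univ) (a : ℕ → B) :
    RegIn (genAlg (range a ∪ range (playII (clubStrategy C) a))) univ := by
  have hU := hC.2.1 _ (hC.hullChain_mem a) (hC.monotone_hullChain a)
  have ha : range a ⊆ ⋃ i, hullChain C a i :=
    range_subset_iff.mpr fun i => mem_iUnion_of_mem i (hC.mem_hullChain a i)
  rw [hC.range_playII_clubStrategy, union_eq_right.mpr ha, (hreg _ hU).1.genAlg_eq]
  exact (hreg _ hU).2

end ClubStrategy

/-- Theorem 4.3 ((a)↔(d)): a Boolean algebra `B` of uniform density is semi-Cohen iff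
player II has a winning strategy in the game `G` where the players alternately pick
elements `a₀, b₀, a₁, b₁, …` of `B` and II wins if the subalgebra generated by all
chosen elements is a regular subalgebra of `B`. -/
theorem semiCohen_iff_II_wins {B : Type*} [BooleanAlgebra B]
    (hud : UnifDensIn (Set.univ : Set B)) :
    SemiCohen (Set.univ : Set B) ↔
      ∃ σ : List B → B, ∀ a : ℕ → B,
        RegIn (genAlg (Set.range a ∪ Set.range (playII σ a))) Set.univ :=
  ⟨fun ⟨_, C, hC, hreg⟩ => ⟨clubStrategy C, hC.clubStrategy_wins hreg⟩,
    fun ⟨_, hσ⟩ => semiCohen_of_winning hud hσ⟩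
end

section
/- Forcing with a semi-Cohen Boolean algebra does not add new cofinal branches to trees of height ω₁: if B is semi-Cohen, T is a tree of height ω₁, and b is a B-name for a branch of T, then it is forced that b is equal to some branch of T in the ground model. -/
/-!
Suppose the values deciding `ḃ` to be a ground-model branch do not sum to `1`, and let `a ≠ 0`
be disjoint from all of them. Then no nonzero `x ≤ a` decides the node of `ḃ` on every level of `T`.
Using the club, close `{a}` off to a countable regular subalgebra `X` together with a countable
set `N` of nodes such that `f '' N ⊆ X`, every `x ∈ X` has a level of `N` on which it decides
nothing, and on each level of `N` every nonzero `x ∈ X` is compatible with some node of `N`.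
The levels of `N` are bounded by some `δ < ω₁`; pick `u` on level `δ` with `b = a ⊓ f u ≠ 0`.
Below `δ` the condition `b` decides `ḃ` (it must be a predecessor of `u`), and by regularity some
nonzero `x ∈ X` lies below every element of `X` above `b`. Taking `m ∈ N` compatible with `x`
on a level where `x` decides nothing, `b` is compatible with `f m`, hence `b ≤ f m`, hence
`x ≤ f m`: a contradiction.
-/

theorem le_of_forall_inf_le_of_sSup_eq_top {α : Type*} [Order.Frame α] {s : Set α} {x z : α}
    (hs : sSup s = ⊤) (h : ∀ y ∈ s, x ⊓ y ≤ z) : x ≤ z :=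
  calc x = x ⊓ sSup s := by rw [hs, inf_top_eq]
    _ = ⨆ y ∈ s, x ⊓ y := inf_sSup_eq
    _ ≤ z := iSup₂_le h

theorem exists_inf_ne_bot_of_sSup_eq_top {α : Type*} [Order.Frame α] {s : Set α} {x : α}
    (hs : sSup s = ⊤) (hx : x ≠ ⊥) : ∃ y ∈ s, x ⊓ y ≠ ⊥ := by
  by_contra! h
  exact hx (le_bot_iff.mp (le_of_forall_inf_le_of_sSup_eq_top hs fun y hy => (h y hy).le))

open Ordinal in
theorem exists_lt_omega_one_forall_lt {ι : Type*} [Countable ι] {o : ι → Ordinal}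
    (ho : ∀ i, o i < ω₁) : ∃ δ < ω₁, ∀ i, o i < δ := by
  have hbdd : BddAbove (Set.range o) := ⟨ω₁, Set.forall_mem_range.mpr fun i => (ho i).le⟩
  exact ⟨Order.succ (⨆ i, o i), (Cardinal.isSuccLimit_omega 1).succ_lt (iSup_lt_omega_one ho),
    fun i => Order.lt_succ_iff.mpr (le_ciSup hbdd i)⟩

theorem StrictMono.eq_of_le_of_apply_eq {α β : Type*} [PartialOrder α] [Preorder β] {g : α → β}
    (hg : StrictMono g) {a b : α} (hab : a ≤ b) (h : g a = g b) : a = b :=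
  hab.eq_of_not_lt fun hlt => (hg hlt).ne h

section RegularSubalgebra

variable {B : Type*} [BooleanAlgebra B]

theorem Subalg.inf_mem {X : Set B} (hX : Subalg X) {x y : B} (hx : x ∈ X) (hy : y ∈ X) :
    x ⊓ y ∈ X := by
  simpa using hX.2.2.2 _ (hX.2.2.1 _ (hX.2.2.2 x hx) _ (hX.2.2.2 y hy))

theorem exists_maxACIn_subset_of_dense {X E : Set B} (hEX : E ⊆ X) (hE : ⊥ ∉ E)
    (hdense : ∀ x ∈ X, x ≠ ⊥ → ∃ e ∈ E, e ≤ x) : ∃ W ⊆ E, MaxACIn W X := by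
  obtain ⟨W, ⟨hWE, hW⟩, hWmax⟩ := zorn_subset
    {W : Set B | W ⊆ E ∧ W.Pairwise fun x y => x ⊓ y = ⊥} fun c hc hchain =>
      ⟨⋃₀ c, ⟨Set.sUnion_subset fun W hW => (hc hW).1,
        (Set.pairwise_sUnion hchain.directedOn).mpr fun W hW => (hc hW).2⟩,
        fun _ => Set.subset_sUnion_of_mem⟩
  refine ⟨W, hWE, hWE.trans hEX, fun h => hE (hWE h), hW, fun x hxX hx => ?_⟩
  obtain ⟨e, heE, hex⟩ := hdense x hxX hx
  by_contra! hdisj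
  have hex_bot : ∀ w ∈ W, e ⊓ w = ⊥ := fun w hw =>
    le_bot_iff.mp ((inf_le_inf_right w hex).trans (hdisj w hw).le)
  have he : e ∈ W :=
    hWmax ⟨Set.insert_subset heE hWE,
        hW.insert fun w hw _ => ⟨hex_bot w hw, inf_comm e w ▸ hex_bot w hw⟩⟩
      (Set.subset_insert e W) (Set.mem_insert e W)
  have hee := hex_bot e he
  rw [inf_idem] at hee
  exact hE (hee ▸ heE)

theorem RegIn.exists_ne_bot_mem_lowerBounds {X : Set B} (hreg : RegIn X Set.univ)
    (hX : Subalg X) {b : B} (hb : b ≠ ⊥) :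
    ∃ x ∈ X, x ≠ ⊥ ∧ x ∈ lowerBounds {e ∈ X | b ≤ e} := by
  by_contra! h
  obtain ⟨W, hWE, hW⟩ := exists_maxACIn_subset_of_dense
    (E := {y ∈ X | y ≠ ⊥ ∧ y ⊓ b = ⊥}) (Set.sep_subset X _) (fun h => h.2.1 rfl)
    fun x hxX hx => by
      obtain ⟨e, ⟨heX, hbe⟩, hxe⟩ := Set.not_subset.mp (h x hxX hx)
      refine ⟨x ⊓ eᶜ, ⟨hX.inf_mem hxX (hX.2.2.2 e heX), fun hxe' => hxe ?_, ?_⟩, inf_le_left⟩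
      · rwa [← sdiff_eq, sdiff_eq_bot_iff] at hxe'
      · exact le_bot_iff.mp (compl_inf_self e ▸ inf_le_inf inf_le_right hbe)
  obtain ⟨w, hwW, hbw⟩ := (hreg W hW).2.2.2 b (Set.mem_univ b) hb
  exact hbw (inf_comm w b ▸ (hWE hwW).2.2)

end RegularSubalgebra

theorem ClubIn.exists_closed {B T : Type*} {C : Set (Set B)} (hC : ClubIn Set.univ C) (a : B)
    (f : T → B) (g : T → B → T) (h : B → T) :
    ∃ X ∈ C, ∃ N : Set T, N.Countable ∧ a ∈ X ∧ f '' N ⊆ X ∧ Set.image2 g N X ⊆ N ∧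
      h '' X ⊆ N := by
  obtain ⟨up, hup⟩ : ∃ up : Set B → Set B, ∀ s : Set B, s.Countable → up s ∈ C ∧ s ⊆ up s := by
    choose! up hup using fun s (hs : s.Countable) => hC.2.2 s (Set.subset_univ s) hs
    exact ⟨up, fun s hs => hup s hs⟩
  let grow : Set B × Set T → Set T := fun p => p.2 ∪ Set.image2 g p.2 p.1 ∪ h '' p.1
  let step : Set B × Set T → Set B × Set T := fun p => (up (p.1 ∪ f '' grow p), grow p)
  let seq : ℕ → Set B × Set T := fun n => step^[n] (up {a}, ∅)
  have hseq : ∀ n, seq (n + 1) = step (seq n) := fun n => Function.iterate_succ_apply' step n _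
  have hnext : ∀ p : Set B × Set T, p.1 ∈ C → p.2.Countable →
      (p.1 ∪ f '' grow p).Countable ∧ (grow p).Countable := fun p h1 h2 =>
    have hgrow := (h2.union (h2.image2 (hC.1 _ h1).2 g)).union ((hC.1 _ h1).2.image h)
    ⟨(hC.1 _ h1).2.union (hgrow.image f), hgrow⟩
  have hgood : ∀ n, (seq n).1 ∈ C ∧ (seq n).2.Countable := by
    intro n
    induction n with
    | zero => exact ⟨(hup {a} (Set.countable_singleton a)).1, Set.countable_empty⟩
    | succ n ih =>
      rw [hseq]
      exact ⟨(hup _ (hnext _ ih.1 ih.2).1).1, (hnext _ ih.1 ih.2).2⟩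
  have hstep : ∀ n, (seq n).1 ∪ f '' grow (seq n) ⊆ (seq (n + 1)).1 := fun n => by
    rw [hseq]
    exact (hup _ (hnext _ (hgood n).1 (hgood n).2).1).2
  have hgrow_sub : ∀ n, grow (seq n) ⊆ (seq (n + 1)).2 := fun n => by rw [hseq]
  have hmono : Monotone seq := monotone_nat_of_le_succ fun n =>
    ⟨Set.subset_union_left.trans (hstep n),
      (Set.subset_union_left.trans Set.subset_union_left).trans (hgrow_sub n)⟩
  refine ⟨⋃ n, (seq n).1, hC.2.1 _ (fun n => (hgood n).1) (monotone_fst.comp hmono),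
    ⋃ n, (seq n).2, Set.countable_iUnion fun n => (hgood n).2,
    Set.mem_iUnion_of_mem 0 ((hup {a} (Set.countable_singleton a)).2 rfl), ?_, ?_, ?_⟩
  · rintro _ ⟨t, ht, rfl⟩
    obtain ⟨n, ht⟩ := Set.mem_iUnion.mp ht
    exact Set.mem_iUnion_of_mem (n + 1)
      (hstep n (Or.inr ⟨t, Or.inl (Or.inl ht), rfl⟩))
  · rintro _ ⟨t, ht, x, hx, rfl⟩
    obtain ⟨i, ht⟩ := Set.mem_iUnion.mp ht
    obtain ⟨j, hx⟩ := Set.mem_iUnion.mp hx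
    refine Set.mem_iUnion_of_mem (max i j + 1) (hgrow_sub _ (Or.inl (Or.inr ?_)))
    exact Set.mem_image2_of_mem ((hmono (le_max_left i j)).2 ht)
      ((hmono (le_max_right i j)).1 hx)
  · rintro _ ⟨x, hx, rfl⟩
    obtain ⟨j, hx⟩ := Set.mem_iUnion.mp hx
    exact Set.mem_iUnion_of_mem (j + 1) (hgrow_sub j (Or.inr ⟨x, hx, rfl⟩))

section BranchName

open Ordinal

variable {B : Type*} [CompleteBooleanAlgebra B] {T : Type*} {lvl : T → Ordinal} {f : T → B}

theorem exists_lvl_eq_inf_ne_bot {α : Ordinal} (hα : sSup {b : B | ∃ t, lvl t = α ∧ b = f t} = ⊤)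
    {x : B} (hx : x ≠ ⊥) : ∃ t, lvl t = α ∧ x ⊓ f t ≠ ⊥ := by
  obtain ⟨_, ⟨t, ht, rfl⟩, hxt⟩ := exists_inf_ne_bot_of_sSup_eq_top hα hx
  exact ⟨t, ht, hxt⟩

theorem le_of_forall_lvl_eq_inf_eq_bot {t : T}
    (hα : sSup {b : B | ∃ t', lvl t' = lvl t ∧ b = f t'} = ⊤) {x : B}
    (h : ∀ t', lvl t' = lvl t → t' ≠ t → x ⊓ f t' = ⊥) : x ≤ f t := by
  refine le_of_forall_inf_le_of_sSup_eq_top hα ?_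
  rintro _ ⟨t', ht', rfl⟩
  by_cases heq : t' = t
  · exact heq ▸ inf_le_right
  · exact (h t' ht' heq).trans_le bot_le

variable [PartialOrder T]

def DecidesBranch (lvl : T → Ordinal) (f : T → B) (u : B) : Prop :=
  ∃ c : Set T, IsChain (· ≤ ·) c ∧ (∀ α < ω_ 1, ∃ t ∈ c, lvl t = α) ∧
    ∀ t : T, (t ∈ c → u ≤ f t) ∧ (t ∉ c → u ≤ (f t)ᶜ)

theorem inf_eq_bot_of_lvl_eq (hmono : StrictMono lvl)
    (hincomp : ∀ s t : T, ¬s ≤ t → ¬t ≤ s → f s ⊓ f t = ⊥) {s t : T} (hl : lvl s = lvl t)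
    (hne : s ≠ t) : f s ⊓ f t = ⊥ :=
  hincomp s t (fun h => hne (hmono.eq_of_le_of_apply_eq h hl))
    (fun h => hne (hmono.eq_of_le_of_apply_eq h hl.symm).symm)

theorem lt_of_le_of_inf_ne_bot (hmono : StrictMono lvl)
    (hincomp : ∀ s t : T, ¬s ≤ t → ¬t ≤ s → f s ⊓ f t = ⊥) {x : B} {s u : T} (hxu : x ≤ f u)
    (hxs : x ⊓ f s ≠ ⊥) (hl : lvl s < lvl u) : s < u := by
  have hsu : f s ⊓ f u ≠ ⊥ := ne_bot_of_le_ne_bot hxs (le_inf inf_le_right (inf_le_left.trans hxu))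
  by_cases h : s ≤ u
  · exact h.lt_of_ne fun heq => hl.ne (congrArg lvl heq)
  · have hus : u ≤ s := not_not.mp fun h' => hsu (hincomp s u h h')
    exact absurd ((hmono.monotone hus).trans_lt hl) (lt_irrefl _)

theorem le_of_le_of_inf_ne_bot (hmono : StrictMono lvl)
    (hpred : ∀ s s' t : T, s < t → s' < t → s ≤ s' ∨ s' ≤ s)
    (hincomp : ∀ s t : T, ¬s ≤ t → ¬t ≤ s → f s ⊓ f t = ⊥) {s u : T}
    (hs : sSup {b : B | ∃ t', lvl t' = lvl s ∧ b = f t'} = ⊤) {x : B} (hxu : x ≤ f u)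
    (hxs : x ⊓ f s ≠ ⊥) (hl : lvl s < lvl u) : x ≤ f s := by
  refine le_of_forall_lvl_eq_inf_eq_bot hs fun t ht hne => ?_
  by_contra hxt
  have hsu := lt_of_le_of_inf_ne_bot hmono hincomp hxu hxs hl
  have htu := lt_of_le_of_inf_ne_bot hmono hincomp hxu hxt (ht ▸ hl)
  refine hne ((hpred t s u htu hsu).elim (hmono.eq_of_le_of_apply_eq · ht) fun h => ?_)
  exact (hmono.eq_of_le_of_apply_eq h ht.symm).symm

theorem decidesBranch_of_forall_exists_le (hmono : StrictMono lvl)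
    (hcofinal : ∀ α < ω_ 1, sSup {b : B | ∃ t : T, lvl t = α ∧ b = f t} = ⊤)
    (hincomp : ∀ s t : T, ¬s ≤ t → ¬t ≤ s → f s ⊓ f t = ⊥) {x : B} (hx : x ≠ ⊥)
    (h : ∀ r : T, ∃ s, lvl s = lvl r ∧ x ≤ f s) : DecidesBranch lvl f x := by
  refine ⟨{t | x ≤ f t}, fun s hs t ht _ => ?_, fun α hα => ?_, fun t => ⟨id, fun ht => ?_⟩⟩
  · by_contra! hst
    exact hx (le_bot_iff.mp (hincomp s t hst.1 hst.2 ▸ le_inf hs ht))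
  · obtain ⟨r, hr, -⟩ := exists_lvl_eq_inf_ne_bot (hcofinal α hα) hx
    obtain ⟨s, hs, hxs⟩ := h r
    exact ⟨s, hxs, hs.trans hr⟩
  · obtain ⟨s, hs, hxs⟩ := h t
    have hst : f s ⊓ f t = ⊥ := inf_eq_bot_of_lvl_eq hmono hincomp hs fun h => ht (h ▸ hxs)
    exact le_compl_iff_disjoint_right.mpr (disjoint_iff.mpr
      (le_bot_iff.mp (hst ▸ inf_le_inf_right (f t) hxs)))

theorem exists_forall_lvl_eq_not_le (hmono : StrictMono lvl)
    (hcofinal : ∀ α < ω_ 1, sSup {b : B | ∃ t : T, lvl t = α ∧ b = f t} = ⊤)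
    (hincomp : ∀ s t : T, ¬s ≤ t → ¬t ≤ s → f s ⊓ f t = ⊥) {x : B} (hx : x ≠ ⊥)
    (hxS : x ≤ (sSup {u | DecidesBranch lvl f u})ᶜ) : ∃ r : T, ∀ s, lvl s = lvl r → ¬x ≤ f s := by
  by_contra! h
  have hxS' : x ≤ sSup {u | DecidesBranch lvl f u} :=
    le_sSup (decidesBranch_of_forall_exists_le hmono hcofinal hincomp hx h)
  exact hx (le_bot_iff.mp ((le_inf hxS' hxS).trans_eq (inf_compl_self _)))

end BranchName

open Ordinal in
/-- The tree `T` is presented by a level function `lvl`, and a name `ḃ` for a cofinal branch by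
`f : T → B`, where `f t` is the Boolean value of `t ∈ ḃ`. The conclusion says that the values
deciding `ḃ` to be a cofinal branch of `T` in the ground model sum to `1`. -/
theorem semiCohen_no_new_branches_general {B : Type*} [CompleteBooleanAlgebra B]
    (hB : SemiCohen (Set.univ : Set B))
    {T : Type*} [PartialOrder T] (lvl : T → Ordinal)
    (hlvl : ∀ t : T, lvl t < ω_ 1)
    (hmono : ∀ s t : T, s < t → lvl s < lvl t)
    (hpred : ∀ s s' t : T, s < t → s' < t → s ≤ s' ∨ s' ≤ s)
    (f : T → B)
    (hcofinal : ∀ α < ω_ 1, sSup {b : B | ∃ t : T, lvl t = α ∧ b = f t} = ⊤)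
    (hincomp : ∀ s t : T, ¬s ≤ t → ¬t ≤ s → f s ⊓ f t = ⊥) :
    sSup {u : B | ∃ c : Set T, IsChain (· ≤ ·) c ∧
        (∀ α < ω_ 1, ∃ t ∈ c, lvl t = α) ∧
        ∀ t : T, (t ∈ c → u ≤ f t) ∧ (t ∉ c → u ≤ (f t)ᶜ)} = ⊤ := by
  obtain ⟨-, C, hC, hCreg⟩ := hB
  change sSup {u | DecidesBranch lvl f u} = ⊤
  by_contra hS
  set a := (sSup {u | DecidesBranch lvl f u})ᶜ
  have ha : a ≠ ⊥ := fun h => hS (compl_eq_bot.mp h)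
  obtain ⟨t₀, -⟩ := exists_lvl_eq_inf_ne_bot (hcofinal 0 (omega_pos 1)) ha
  have : Nonempty T := ⟨t₀⟩
  choose! meet hmeet using fun (t : T) (x : B) (hx : x ≠ ⊥) =>
    exists_lvl_eq_inf_ne_bot (hcofinal _ (hlvl t)) hx
  choose! split hsplit using fun x (hx : x ≠ ⊥) (hxa : x ≤ a) =>
    exists_forall_lvl_eq_not_le hmono hcofinal hincomp hx hxa
  obtain ⟨X, hXC, N, hN, haX, hfN, hmeetN, hsplitN⟩ := hC.exists_closed a f meet split
  obtain ⟨hX, hXreg⟩ := hCreg X hXC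
  have : Countable N := hN.to_subtype
  obtain ⟨δ, hδ, hNδ⟩ := exists_lt_omega_one_forall_lt fun t : N => hlvl t
  obtain ⟨u, hu, hau⟩ := exists_lvl_eq_inf_ne_bot (hcofinal δ hδ) ha
  obtain ⟨x, hxX, hx, hxb⟩ := hXreg.exists_ne_bot_mem_lowerBounds hX hau
  have hxa : x ≤ a := hxb ⟨haX, inf_le_left⟩
  set m := meet (split x) x
  have hmN : m ∈ N := hmeetN ⟨split x, hsplitN ⟨x, hxX, rfl⟩, x, hxX, rfl⟩
  have hfmX : f m ∈ X := hfN ⟨m, hmN, rfl⟩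
  obtain ⟨hml, hxm⟩ := hmeet (split x) x hx
  have hbm : a ⊓ f u ⊓ f m ≠ ⊥ := by
    intro h
    have hxm' : x ≤ (f m)ᶜ :=
      hxb ⟨hX.2.2.2 _ hfmX, le_compl_iff_disjoint_right.mpr (disjoint_iff.mpr h)⟩
    exact hxm (disjoint_iff.mp (le_compl_iff_disjoint_right.mp hxm'))
  have hbm' : a ⊓ f u ≤ f m := le_of_le_of_inf_ne_bot hmono hpred hincomp
    (hcofinal _ (hlvl m)) inf_le_right hbm (hu ▸ hNδ ⟨m, hmN⟩)
  exact hsplit x hx hxa m hml (hxb ⟨hfmX, hbm'⟩)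

open Ordinal in
/-- Lemma 4.7: forcing with a (complete) semi-Cohen algebra adds no new cofinal
branches to trees of height `ω₁`. The tree `T` is presented with a level function
`lvl : T → Ordinal` with countable levels indices, and a name for a branch of `T`
is presented Boolean-valuedly as `f : T → B`, where `f t` is the truth value of
`t ∈ ḃ`: the values along each level sum to `1` (the branch is cofinal), `f` is
monotone decreasing, and incomparable nodes get disjoint values. The conclusion says
that it is forced that `ḃ` equals some cofinal branch of `T` from the ground model:
the values deciding `ḃ` to be a ground-model branch sum to `1`. -/
theorem semiCohen_no_new_branches {B : Type*} [CompleteBooleanAlgebra B]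
    (hB : SemiCohen (Set.univ : Set B))
    {T : Type*} [PartialOrder T] (lvl : T → Ordinal)
    (hlvl : ∀ t : T, lvl t < ω_ 1)
    (hmono : ∀ s t : T, s < t → lvl s < lvl t)
    (hpred : ∀ s s' t : T, s < t → s' < t → s ≤ s' ∨ s' ≤ s)
    (hheight : ∀ α < ω_ 1, ∃ t : T, lvl t = α)
    (f : T → B)
    (hcofinal : ∀ α < ω_ 1, sSup {b : B | ∃ t : T, lvl t = α ∧ b = f t} = ⊤)
    (hchain : ∀ s t : T, s ≤ t → f t ≤ f s)
    (hincomp : ∀ s t : T, ¬s ≤ t → ¬t ≤ s → f s ⊓ f t = ⊥) :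
    sSup {u : B | ∃ c : Set T, IsChain (· ≤ ·) c ∧
        (∀ α < ω_ 1, ∃ t ∈ c, lvl t = α) ∧
        ∀ t : T, (t ∈ c → u ≤ f t) ∧ (t ∉ c → u ≤ (f t)ᶜ)} = ⊤ :=
  semiCohen_no_new_branches_general hB lvl hlvl hmono hpred f hcofinal hincomp
end
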